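/- For a fixed n ≥ 2 and d ≥ 0, the set of isomorphism classes of stable (n,d)-trees is finite. -/

import Mathlib

/-- A stable `(n,d)`-tree: a tree (flags `F`, vertices `V`, attaching map
`par`, involution `j`; leaves are the fixed points of `j`, edges are the
two-element orbits of `j`; the tree condition is `#V = #E + 1` together with
connectedness) whose leaves are bijectively labelled by `{1,…,n}`, together
with a degree map `deg : V → ℤ≥0` of total sum `d`, such that every vertex `v`
has `deg v ≠ 0` or valence `> 2`. -/
structure StableTree (n d : ℕ) : Type 1 where
  /-- The set of flags. -/
  F : Type
  /-- The set of vertices. -/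
  V : Type
  finF : Finite F
  finV : Finite V
  /-- Each flag is attached to a unique vertex. -/
  par : F → V
  /-- The involution whose fixed points are the leaves and whose two-element
  orbits are the edges. -/
  j : F → F
  jinv : Function.Involutive j
  /-- Connectedness of the tree. -/
  conn : ∀ v w : V,
    Relation.ReflTransGen (fun a b => ∃ f, j f ≠ f ∧ par f = a ∧ par (j f) = b) v w
  /-- The tree condition `#V = #E + 1`. -/
  treeCard : Nat.card V =
    Nat.card {s : Sym2 F // ∃ f, j f ≠ f ∧ s = Sym2.mk f (j f)} + 1
  /-- The bijective labelling of the leaves by `{1,…,n}`. -/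
  label : {f : F // j f = f} ≃ Fin n
  /-- The degree map `β : V → ℤ≥0`. -/
  deg : V → ℕ
  /-- The total degree is `d`. -/
  degSum : ∑ᶠ v : V, deg v = d
  /-- Stability: every vertex has nonzero degree or valence `> 2`. -/
  stable : ∀ v : V, deg v ≠ 0 ∨ 2 < Nat.card {f : F // par f = v}

/-- Isomorphism of stable `(n,d)`-trees: a graph isomorphism compatible with
the leaf labels and the vertex degrees. -/
def StableTree.Iso {n d : ℕ} (t t' : StableTree n d) : Prop :=
  ∃ (eF : t.F ≃ t'.F) (eV : t.V ≃ t'.V),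
    (∀ f, eV (t.par f) = t'.par (eF f)) ∧
    (∀ f, eF (t.j f) = t'.j (eF f)) ∧
    (∀ (f : {f // t.j f = f}) (g : {f // t'.j f = f}),
      eF f.1 = g.1 → t.label f = t'.label g) ∧
    (∀ v, t.deg v = t'.deg (eV v))
/-!
Stability forces every vertex of a tree with at least two vertices to satisfy
`3 ≤ valence + 2 * deg`, since valence is at least one by connectedness. Summing over the
vertices and using `#F = n + 2 #E = n + 2 (#V - 1)` gives `#V ≤ n + 2d - 2`, hence a bound on
the number of flags. A stable tree is thus determined up to isomorphism by a code from a finite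
type: numberings of its flags and vertices by initial segments of `ℕ` of bounded length, the
attaching map, the involution, the leaves and the degrees read through these numberings.
-/

theorem Function.Involutive.card_eq_card_fixed_add_two_mul_card_pairs {α : Type*} [Finite α]
    {j : α → α} (hj : Function.Involutive j) :
    Nat.card α = Nat.card {x // j x = x} +
      2 * Nat.card {s : Sym2 α // ∃ x, j x ≠ x ∧ s = s(x, j x)} := by
  classical
  let pair : {x // j x ≠ x} → {s : Sym2 α // ∃ x, j x ≠ x ∧ s = s(x, j x)} :=
    fun x => ⟨s(x.1, j x.1), x.1, x.2, rfl⟩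
  have card_fiber : ∀ s, Nat.card {x // pair x = s} = 2 := by
    rintro ⟨_, x, hx, rfl⟩
    have hjx : j (j x) ≠ j x := by rw [hj x]; exact hx.symm
    refine Nat.card_eq_two_iff.mpr ⟨⟨⟨x, hx⟩, rfl⟩, ⟨⟨j x, hjx⟩, ?_⟩, ?_, ?_⟩
    · simp only [pair, hj x, Sym2.eq_swap]
    · simpa [Subtype.ext_iff] using hx.symm
    · refine Set.eq_univ_of_forall fun ⟨⟨y, hy⟩, hyx⟩ => ?_
      rcases Sym2.eq_iff.mp (congrArg Subtype.val hyx) with ⟨rfl, -⟩ | ⟨rfl, -⟩ <;> simp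
  have card_moved : Nat.card {x // j x ≠ x} =
      2 * Nat.card {s : Sym2 α // ∃ x, j x ≠ x ∧ s = s(x, j x)} := by
    have := Fintype.ofFinite {s : Sym2 α // ∃ x, j x ≠ x ∧ s = s(x, j x)}
    rw [← Nat.card_congr (Equiv.sigmaFiberEquiv pair), Nat.card_sigma,
      Finset.sum_congr rfl fun s _ => card_fiber s, Finset.sum_const, smul_eq_mul, mul_comm,
      Finset.card_univ, Nat.card_eq_fintype_card]
  rw [← card_moved, ← Nat.card_sum, Nat.card_congr (Equiv.sumCompl _)]

namespace StableTree

variable {n d : ℕ} (t : StableTree n d)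

instance : Finite t.F := t.finF

instance : Finite t.V := t.finV

noncomputable def valence (v : t.V) : ℕ := Nat.card {f // t.par f = v}

theorem card_flags_add_two : Nat.card t.F + 2 = n + 2 * Nat.card t.V := by
  have h := t.jinv.card_eq_card_fixed_add_two_mul_card_pairs
  rw [Nat.card_congr t.label, Nat.card_fin] at h
  rw [t.treeCard]
  omega

theorem sum_valence [Fintype t.V] : ∑ v, t.valence v = Nat.card t.F := by
  rw [← Nat.card_congr (Equiv.sigmaFiberEquiv t.par), Nat.card_sigma]
  rfl

theorem sum_deg [Fintype t.V] : ∑ v, t.deg v = d := by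
  rw [← finsum_eq_sum_of_fintype, t.degSum]

theorem deg_le (v : t.V) : t.deg v ≤ d :=
  (single_le_finsum v (Set.toFinite _) fun _ => Nat.zero_le _).trans_eq t.degSum

theorem one_le_valence [Nontrivial t.V] (v : t.V) : 1 ≤ t.valence v := by
  obtain ⟨w, hw⟩ := exists_ne v
  rcases (t.conn v w).cases_head with rfl | ⟨_, ⟨f, -, hf, -⟩, -⟩
  · exact absurd rfl hw
  · exact Nat.one_le_iff_ne_zero.mpr (Nat.card_ne_zero.mpr ⟨⟨⟨f, hf⟩⟩, inferInstance⟩)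

theorem three_le_valence_add_two_mul_deg [Nontrivial t.V] (v : t.V) :
    3 ≤ t.valence v + 2 * t.deg v := by
  have := t.one_le_valence v
  rcases t.stable v with h | h
  · omega
  · exact le_add_right h

theorem card_vertices_le : Nat.card t.V ≤ n + 2 * d + 1 := by
  rcases subsingleton_or_nontrivial t.V with hV | hV
  · have := Finite.card_le_one_iff_subsingleton.mpr hV
    omega
  · have := Fintype.ofFinite t.V
    have := t.card_flags_add_two
    have : 3 * Nat.card t.V ≤ Nat.card t.F + 2 * d := calc
      3 * Nat.card t.V = ∑ _v : t.V, 3 := by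
        rw [Finset.sum_const, Finset.card_univ, Nat.card_eq_fintype_card, smul_eq_mul, mul_comm]
      _ ≤ ∑ v, (t.valence v + 2 * t.deg v) :=
        Finset.sum_le_sum fun v _ => t.three_le_valence_add_two_mul_deg v
      _ = Nat.card t.F + 2 * d := by
        rw [Finset.sum_add_distrib, ← Finset.mul_sum, sum_valence, sum_deg]
    omega

theorem card_flags_le : Nat.card t.F ≤ 3 * n + 4 * d := by
  have := t.card_flags_add_two
  have := t.card_vertices_le
  omega

structure Code (n d B : ℕ) where
  numFlags : Fin (B + 1)
  numVertices : Fin (B + 1)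
  par : Fin numFlags → Fin numVertices
  j : Fin numFlags → Fin numFlags
  /-- The flag labelled `i`: recording the labelling through its inverse needs no value on
  inner flags. -/
  leaf : Fin n → Fin numFlags
  deg : Fin numVertices → Fin (d + 1)

instance (n d B : ℕ) : Finite (Code n d B) :=
  Finite.of_injective
    (fun c : Code n d B => (⟨c.numFlags, c.numVertices, c.par, c.j, c.leaf, c.deg⟩ :
      Σ k m : Fin (B + 1), (Fin k → Fin m) × (Fin k → Fin k) × (Fin n → Fin k) ×
        (Fin m → Fin (d + 1))))
    (by rintro ⟨⟩ ⟨⟩ h; cases h; rfl)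

def Encodes {B : ℕ} (c : Code n d B) : Prop :=
  ∃ (eF : t.F ≃ Fin c.numFlags) (eV : t.V ≃ Fin c.numVertices),
    (∀ f, c.par (eF f) = eV (t.par f)) ∧ (∀ f, c.j (eF f) = eF (t.j f)) ∧
    (∀ i, c.leaf i = eF (t.label.symm i)) ∧ (∀ v, (c.deg (eV v) : ℕ) = t.deg v)

theorem exists_encodes : ∃ c : Code n d (3 * n + 4 * d + 1), t.Encodes c := by
  let eF := Finite.equivFin t.F
  let eV := Finite.equivFin t.V
  have := t.card_flags_le
  have := t.card_vertices_le
  refine ⟨⟨⟨Nat.card t.F, by omega⟩, ⟨Nat.card t.V, by omega⟩,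
    fun i => eV (t.par (eF.symm i)), fun i => eF (t.j (eF.symm i)),
    fun i => eF (t.label.symm i), fun i => ⟨t.deg (eV.symm i), Nat.lt_succ_of_le (t.deg_le _)⟩⟩,
    eF, eV, ?_, ?_, ?_, ?_⟩ <;> simp

theorem iso_of_encodes {t t' : StableTree n d} {B : ℕ} {c : Code n d B}
    (h : t.Encodes c) (h' : t'.Encodes c) : t.Iso t' := by
  obtain ⟨eF, eV, hpar, hj, hleaf, hdeg⟩ := h
  obtain ⟨eF', eV', hpar', hj', hleaf', hdeg'⟩ := h'
  refine ⟨eF.trans eF'.symm, eV.trans eV'.symm, fun f => ?_, fun f => ?_, fun f g hfg => ?_,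
    fun v => ?_⟩
  · rw [Equiv.trans_apply, Equiv.trans_apply, eV'.symm_apply_eq, ← hpar, ← hpar',
      Equiv.apply_symm_apply]
  · rw [Equiv.trans_apply, Equiv.trans_apply, eF'.symm_apply_eq, ← hj, ← hj',
      Equiv.apply_symm_apply]
  · rw [Equiv.trans_apply, eF'.symm_apply_eq] at hfg
    have : eF' (t'.label.symm (t.label f)) = eF' g := by
      rw [← hleaf', hleaf, Equiv.symm_apply_apply, hfg]
    rw [← Subtype.ext (eF'.injective this), Equiv.apply_symm_apply]
  · rw [Equiv.trans_apply, ← hdeg, ← hdeg', Equiv.apply_symm_apply]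

end StableTree

theorem finite_isoClasses_stableTrees_general (n d : ℕ) :
    Finite (Quot (StableTree.Iso (n := n) (d := d))) := by
  refine Finite.of_surjective
    (fun c : {c : StableTree.Code n d (3 * n + 4 * d + 1) // ∃ t : StableTree n d, t.Encodes c} =>
      Quot.mk _ c.2.choose) ?_
  rintro ⟨t⟩
  obtain ⟨c, hc⟩ := t.exists_encodes
  let c' : {c : StableTree.Code n d (3 * n + 4 * d + 1) // ∃ t : StableTree n d, t.Encodes c} :=
    ⟨c, t, hc⟩
  exact ⟨c', Quot.sound (StableTree.iso_of_encodes c'.2.choose_spec hc)⟩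

/-- For fixed `n ≥ 2` and `d ≥ 0`, the set of isomorphism classes of stable
`(n,d)`-trees is finite. -/
theorem finite_isoClasses_stableTrees (n d : ℕ) (hn : 2 ≤ n) :
    Finite (Quot (StableTree.Iso (n := n) (d := d))) :=
  finite_isoClasses_stableTrees_general n d
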